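/- For any L ⊂ C₀(S)×C(S), the set of solutions of the martingale local problem is unchanged by taking the closed linear span: M( closure in C₀(S)×C(S) of the linear span of L ) = M(L). -/

import Mathlib

open MeasureTheory Filter Topology Set
open scoped ENNReal NNReal ZeroAtInfty

noncomputable section

namespace LocFeller

attribute [local instance] Classical.propDecidable

variable (S : Type) [TopologicalSpace S] [T2Space S] [LocallyCompactSpace S]
  [SecondCountableTopology S]

/-- The compactified space `S^Δ`. -/
abbrev SD := OnePoint S

instance : MeasurableSpace (SD S) := borel _
instance : BorelSpace (SD S) := ⟨rfl⟩

/-- The canonical uniformity of the compact Hausdorff space `S^Δ`. -/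
def unifSD : UniformSpace (SD S) := uniformSpaceOfCompactR1

variable {S}

/-- A subset of `S^Δ` is relatively compact in `S` if it is contained in (the image in `S^Δ` of)
a compact subset of `S`. -/
def RelCpt (A : Set (SD S)) : Prop :=
  ∃ K : Set S, IsCompact K ∧ A ⊆ (fun a : S => (a : SD S)) '' K

/-- The explosion time `ξ(x)` of a path. -/
def xi (x : ℝ≥0 → SD S) : ℝ≥0∞ :=
  sInf {t : ℝ≥0∞ | ∃ t' : ℝ≥0, t = (t' : ℝ≥0∞) ∧ ¬ RelCpt {y | ∃ s ≤ t', x s = y}}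

/-- The set of exploding cadlag paths `D_loc(S)`. -/
def DlocSet : Set (ℝ≥0 → SD S) :=
  {x | (∀ t : ℝ≥0, xi x ≤ (t : ℝ≥0∞) → x t = OnePoint.infty) ∧
       (∀ t : ℝ≥0, Tendsto x (𝓝[>] t) (𝓝 (x t))) ∧
       (∀ t : ℝ≥0, 0 < t → RelCpt {y | ∃ s < t, x s = y} →
          ∃ l : SD S, Tendsto x (𝓝[<] t) (𝓝 l))}

variable (S) in
/-- The space `D_loc(S)` of exploding cadlag paths. -/
def Dloc : Type := {x : ℝ≥0 → SD S // x ∈ DlocSet}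

/-- The canonical process / evaluation. -/
def ev (x : Dloc S) (t : ℝ≥0) : SD S := x.1 t

variable (S) in
/-- The set of everywhere cadlag paths, underlying `D(S^Δ)`. -/
def DDSet : Set (ℝ≥0 → SD S) :=
  {x | (∀ t : ℝ≥0, Tendsto x (𝓝[>] t) (𝓝 (x t))) ∧
       (∀ t : ℝ≥0, 0 < t → ∃ l : SD S, Tendsto x (𝓝[<] t) (𝓝 l))}

variable (S) in
/-- The space `D(S^Δ)` of cadlag paths with values in `S^Δ`. -/
def DD : Type := {x : ℝ≥0 → SD S // x ∈ DDSet S}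

/-- Convergence for the local Skorokhod topology. -/
def LSConv (xk : ℕ → Dloc S) (x : Dloc S) : Prop :=
  ∃ lam : ℕ → ℝ≥0 → ℝ≥0,
    (∀ k, StrictMono (lam k) ∧ Function.Surjective (lam k)) ∧
    ∀ t : ℝ≥0, RelCpt {y | ∃ s < t, x.1 s = y} →
      (∀ V ∈ @uniformity (SD S) (unifSD S), ∀ᶠ k in atTop, ∀ s ≤ t, (x.1 s, (xk k).1 (lam k s)) ∈ V) ∧
      (∀ ε : ℝ≥0, 0 < ε → ∀ᶠ k in atTop, ∀ s ≤ t, dist (lam k s) s ≤ (ε : ℝ))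

/-- Convergence for the global Skorokhod topology. -/
def GSConv (xk : ℕ → DD S) (x : DD S) : Prop :=
  ∃ lam : ℕ → ℝ≥0 → ℝ≥0,
    (∀ k, StrictMono (lam k) ∧ Function.Surjective (lam k)) ∧
    ∀ t : ℝ≥0,
      (∀ V ∈ @uniformity (SD S) (unifSD S), ∀ᶠ k in atTop, ∀ s ≤ t, (x.1 s, (xk k).1 (lam k s)) ∈ V) ∧
      (∀ ε : ℝ≥0, 0 < ε → ∀ᶠ k in atTop, ∀ s ≤ t, dist (lam k s) s ≤ (ε : ℝ))

/-- The local Skorokhod topology on `D_loc(S)`, described through its convergent sequences. -/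
instance : TopologicalSpace (Dloc S) where
  IsOpen U := ∀ x ∈ U, ∀ xk : ℕ → Dloc S, LSConv xk x → ∀ᶠ k in atTop, xk k ∈ U
  isOpen_univ := by intro x _ xk _; simp
  isOpen_inter := by
    intro U V hU hV x hx xk hconv
    exact (hU x hx.1 xk hconv).and (hV x hx.2 xk hconv)
  isOpen_sUnion := by
    intro 𝒮 h x hx xk hconv
    obtain ⟨U, hU, hxU⟩ := hx
    exact (h U hU x hxU xk hconv).mono fun k hk => ⟨U, hU, hk⟩

/-- The global Skorokhod topology on `D(S^Δ)`. -/
instance : TopologicalSpace (DD S) where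
  IsOpen U := ∀ x ∈ U, ∀ xk : ℕ → DD S, GSConv xk x → ∀ᶠ k in atTop, xk k ∈ U
  isOpen_univ := by intro x _ xk _; simp
  isOpen_inter := by
    intro U V hU hV x hx xk hconv
    exact (hU x hx.1 xk hconv).and (hV x hx.2 xk hconv)
  isOpen_sUnion := by
    intro 𝒮 h x hx xk hconv
    obtain ⟨U, hU, hxU⟩ := hx
    exact (h U hU x hxU xk hconv).mono fun k hk => ⟨U, hU, hk⟩

/-- The σ-algebra `F := σ(X_s, 0 ≤ s < ∞)` on `D_loc(S)`. -/
instance : MeasurableSpace (Dloc S) :=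
  ⨆ t : ℝ≥0, MeasurableSpace.comap (fun x : Dloc S => x.1 t) inferInstance

/-- The σ-algebra `F := σ(X_s, 0 ≤ s < ∞)` on `D(S^Δ)`. -/
instance : MeasurableSpace (DD S) :=
  ⨆ t : ℝ≥0, MeasurableSpace.comap (fun x : DD S => x.1 t) inferInstance

variable (S) in
/-- The canonical filtration `F_t := σ(X_s, 0 ≤ s ≤ t)` on `D_loc(S)`. -/
def canFilt : Filtration ℝ≥0 (inferInstance : MeasurableSpace (Dloc S)) where
  seq t := ⨆ s : {s : ℝ≥0 // s ≤ t}, MeasurableSpace.comap (fun x : Dloc S => x.1 s.1) inferInstance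
  mono' s t hst := iSup_le fun u => le_iSup_of_le ⟨u.1, u.2.trans hst⟩ le_rfl
  le' t := iSup_le fun u =>
    le_iSup (fun r : ℝ≥0 => MeasurableSpace.comap (fun x : Dloc S => x.1 r) inferInstance) u.1

variable (S) in
/-- The canonical filtration on `D(S^Δ)`. -/
def canFiltDD : Filtration ℝ≥0 (inferInstance : MeasurableSpace (DD S)) where
  seq t := ⨆ s : {s : ℝ≥0 // s ≤ t}, MeasurableSpace.comap (fun x : DD S => x.1 s.1) inferInstance
  mono' s t hst := iSup_le fun u => le_iSup_of_le ⟨u.1, u.2.trans hst⟩ le_rfl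
  le' t := iSup_le fun u =>
    le_iSup (fun r : ℝ≥0 => MeasurableSpace.comap (fun x : DD S => x.1 r) inferInstance) u.1

variable (S) in
/-- The right-continuous filtration `F_{t+}`. -/
def FPlus (t : ℝ≥0) : MeasurableSpace (Dloc S) :=
  ⨅ s : {s : ℝ≥0 // t < s}, canFilt S s.1

/-- `τ` is an `(F_{t+})_t`-stopping time. -/
def IsStopT (τ : Dloc S → ℝ≥0∞) : Prop :=
  ∀ t : ℝ≥0, MeasurableSet[FPlus S t] {x | τ x ≤ (t : ℝ≥0∞)}


/-- Extension of a function on `S` to `S^Δ` by the value `0` at `Δ`. -/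
def gop (g : S → ℝ) : SD S → ℝ := fun a => OnePoint.elim a 0 g

/-- Evaluation of a path at an extended time, with the convention `X_∞ := Δ`. -/
def evalAtE (x : ℝ≥0 → SD S) (r : ℝ≥0∞) : SD S :=
  if r = ∞ then OnePoint.infty else x r.toNNReal

/-- The image of `U ⊆ S` in `S^Δ`. -/
def emb (U : Set S) : Set (SD S) := (fun a : S => (a : SD S)) '' U

/-- The exit time `τ^U := inf{t ≥ 0 | X_{t−} ∉ U or X_t ∉ U} ∧ ξ`. -/
def tauU (U : Set S) (x : ℝ≥0 → SD S) : ℝ≥0∞ :=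
  min (xi x)
    (sInf {t : ℝ≥0∞ | ∃ t' : ℝ≥0, t = (t' : ℝ≥0∞) ∧
      (Function.leftLim x t' ∉ emb U ∨ x t' ∉ emb U)})

/-- The process `t ↦ f(X_{t∧τ^U}) − ∫_0^{t∧τ^U} g(X_s) ds`. -/
def martProc (f : S → ℝ) (g : S → ℝ) (U : Set S) (t : ℝ≥0) (x : Dloc S) : ℝ :=
  gop f (evalAtE x.1 (min (t : ℝ≥0∞) (tauU U x.1))) -
    ∫ s in Set.Ioc (0 : ℝ) (min (t : ℝ≥0∞) (tauU U x.1)).toReal,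
      gop g (x.1 (Real.toNNReal s))

variable (S) in
/-- `U` is an open subset compactly embedded in `S`. -/
def OpenCpt (U : Set S) : Prop := IsOpen U ∧ IsCompact (closure U)

/-- The set `M(L)` of solutions of the martingale local problem associated to
`L ⊆ C₀(S) × C(S)`. -/
def MartSet (L : Set (C₀(S, ℝ) × C(S, ℝ))) : Set (Measure (Dloc S)) :=
  {P | IsProbabilityMeasure P ∧ ∀ fg ∈ L, ∀ U : Set S, OpenCpt S U →
      Martingale (fun t => martProc (fg.1 : S → ℝ) (fg.2 : S → ℝ) U t) (canFilt S) P}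

/-- The domain `D(L)` of `L ⊆ C₀(S) × C(S)`. -/
def dom (L : Set (C₀(S, ℝ) × C(S, ℝ))) : Set C₀(S, ℝ) := Prod.fst '' L

/-- The constant path equal to `Δ`. -/
def deltaPath : Dloc S := by
  refine ⟨fun _ => OnePoint.infty, ?_, fun t => tendsto_const_nhds, fun t _ h => ?_⟩
  · intro t _; rfl
  · exact ⟨OnePoint.infty, tendsto_const_nhds⟩

/-- Extension of a family `(P_a)_{a ∈ S}` to `S^Δ`, mapping `Δ` to the law `P_Δ` of the
constant path at `Δ` (the unique law such that `P_Δ(ξ = 0) = 1`). -/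
def PextF (P : S → Measure (Dloc S)) : SD S → Measure (Dloc S) :=
  fun a => OnePoint.elim a (Measure.dirac deltaPath) P

/-- `P_μ := ∫ P_a μ(da)` for a measure `μ` on `S^Δ`. -/
def Pmu (P : S → Measure (Dloc S)) (μ : Measure (SD S)) : Measure (Dloc S) :=
  μ.bind (PextF P)

/-- The path `(X_{t₀+t})_{t ≥ 0}` (shift of a path). -/
def shiftD (t0 : ℝ≥0) (x : Dloc S) : Dloc S :=
  if h : (fun t => x.1 (t0 + t)) ∈ DlocSet then ⟨_, h⟩ else x

/-- The path `(X_{τ+t})_{t ≥ 0}` for a random time `τ`, with the convention `X_∞ := Δ`. -/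
def shiftTauD (τ : Dloc S → ℝ≥0∞) (x : Dloc S) : Dloc S :=
  if h : (fun t : ℝ≥0 => evalAtE x.1 (τ x + (t : ℝ≥0∞))) ∈ DlocSet then ⟨_, h⟩ else x

/-- The path stopped at `τ^U`, i.e. `X^{τ^U}`. -/
def stopD (U : Set S) (x : Dloc S) : Dloc S :=
  if h : (fun t : ℝ≥0 => evalAtE x.1 (min (t : ℝ≥0∞) (tauU U x.1))) ∈ DlocSet then ⟨_, h⟩ else x

/-- A Markov family of probability measures on `D_loc(S)`. -/
structure IsMarkovFamily (P : S → Measure (Dloc S)) : Prop where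
  meas : ∀ B : Set (Dloc S), MeasurableSet B →
    @Measurable S ℝ≥0∞ (borel S) inferInstance (fun a => P a B)
  prob : ∀ a, IsProbabilityMeasure (P a)
  init : ∀ a : S, P a {x | x.1 0 = (a : SD S)} = 1
  markov : ∀ B : Set (Dloc S), MeasurableSet B → ∀ a : S, ∀ t0 : ℝ≥0,
    (P a)[Set.indicator (shiftD t0 ⁻¹' B) (fun _ => (1 : ℝ)) | canFilt S t0]
      =ᵐ[P a] fun x => (PextF P (x.1 t0) B).toReal

/-- A Feller family of probability measures on `D_loc(S)`. -/
def IsFellerFamily (P : S → Measure (Dloc S)) : Prop :=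
  IsMarkovFamily P ∧ ∀ f : C₀(S, ℝ), ∀ t : ℝ≥0,
    Continuous (fun a : S => ∫ x, gop (f : S → ℝ) (x.1 t) ∂(P a)) ∧
    Tendsto (fun a : S => ∫ x, gop (f : S → ℝ) (x.1 t) ∂(P a)) (cocompact S) (𝓝 0)

/-- A locally Feller family: a family which is, for some `L ⊆ C₀(S) × C(S)` with dense
domain, the unique solution of the martingale local problem associated to `L`. -/
def IsLocallyFellerFamily (P : S → Measure (Dloc S)) : Prop :=
  ∃ L : Set (C₀(S, ℝ) × C(S, ℝ)), Dense (dom L) ∧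
    ∀ a : S, ∀ Q : Measure (Dloc S),
      (Q ∈ MartSet L ∧ Q {x | x.1 0 = (a : SD S)} = 1) ↔ Q = P a

variable (S) in
/-- The weak topology on measures on `D_loc(S)` (for the local Skorokhod topology). -/
def weakTop : TopologicalSpace (Measure (Dloc S)) :=
  ⨅ f : {f : Dloc S → ℝ // Continuous f ∧ ∃ C : ℝ, ∀ x, |f x| ≤ C},
    TopologicalSpace.induced (fun P : Measure (Dloc S) => ∫ x, f.1 x ∂P) inferInstance

variable (S) in
/-- The weak topology on measures on `D(S^Δ)` (for the global Skorokhod topology). -/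
def weakTopDD : TopologicalSpace (Measure (DD S)) :=
  ⨅ f : {f : DD S → ℝ // Continuous f ∧ ∃ C : ℝ, ∀ x, |f x| ≤ C},
    TopologicalSpace.induced (fun P : Measure (DD S) => ∫ x, f.1 x ∂P) inferInstance

/-- Weak convergence of a sequence of measures on `D_loc(S)`, for the local Skorokhod
topology. -/
def WeakConv (P : ℕ → Measure (Dloc S)) (Q : Measure (Dloc S)) : Prop :=
  ∀ f : Dloc S → ℝ, Continuous f → (∃ C : ℝ, ∀ x, |f x| ≤ C) →
    Tendsto (fun n => ∫ x, f x ∂(P n)) atTop (𝓝 (∫ x, f x ∂Q))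


/-! ### Time change -/

/-- `τ^{g≠0}(x) := inf{t ≥ 0 | g(x_{t−}) ∧ g(x_t) = 0} ∧ ξ(x)`. -/
def taug0 (g : S → ℝ) (x : ℝ≥0 → SD S) : ℝ≥0∞ :=
  min (xi x)
    (sInf {t : ℝ≥0∞ | ∃ t' : ℝ≥0, t = (t' : ℝ≥0∞) ∧
      min (gop g (Function.leftLim x t')) (gop g (x t')) = 0})

/-- The additive functional `s ↦ ∫_0^s du / g(x_u)`. -/
def Ag (g : S → ℝ) (x : ℝ≥0 → SD S) (s : ℝ≥0) : ℝ≥0∞ :=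
  ∫⁻ u in Set.Ioc (0 : ℝ) (s : ℝ), ENNReal.ofReal (1 / gop g (x (Real.toNNReal u)))

/-- The time change `τ_t^g(x) := inf{s ≥ 0 | s ≥ τ^{g≠0} or ∫_0^s du/g(x_u) ≥ t}`. -/
def taug (g : S → ℝ) (x : ℝ≥0 → SD S) (t : ℝ≥0) : ℝ≥0∞ :=
  sInf {s : ℝ≥0∞ | taug0 g x ≤ s ∨ ∃ s' : ℝ≥0, s = (s' : ℝ≥0∞) ∧ (t : ℝ≥0∞) ≤ Ag g x s'}

/-- Left limit of a path at an extended time (limit at infinity if the time is `∞`). -/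
def leftLimE (x : ℝ≥0 → SD S) (τ : ℝ≥0∞) : SD S :=
  if τ = ∞ then limUnder atTop x else Function.leftLim x τ.toNNReal

/-- Existence of the left limit of a path at an extended time. -/
def ExLeftLimE (x : ℝ≥0 → SD S) (τ : ℝ≥0∞) : Prop :=
  if τ = ∞ then ∃ l : SD S, Tendsto x atTop (𝓝 l)
  else τ = 0 ∨ ∃ l : SD S, Tendsto x (𝓝[<] τ.toNNReal) (𝓝 l)

/-- The time-changed path `g·x`. -/
def tcPath (g : S → ℝ) (x : ℝ≥0 → SD S) : ℝ≥0 → SD S := fun t =>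
  if taug g x t = taug0 g x ∧ ExLeftLimE x (taug0 g x) ∧
      leftLimE x (taug0 g x) ≠ OnePoint.infty ∧ gop g (leftLimE x (taug0 g x)) = 0
  then leftLimE x (taug0 g x)
  else evalAtE x (taug g x t)

/-- The time-changed path `g·x`, as an element of `D_loc(S)`. -/
def tcD (g : S → ℝ) (x : Dloc S) : Dloc S :=
  if h : tcPath g x.1 ∈ DlocSet then ⟨_, h⟩ else x

/-- The time-changed probability `g·P`: the pushforward of `P` by `x ↦ g·x`. -/
def tcM (g : S → ℝ) (P : Measure (Dloc S)) : Measure (Dloc S) :=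
  Measure.map (tcD g) P

/-! ### Stopping times, strong Markov, quasi-continuity -/

/-- The σ-algebra `F_{τ+}` associated to a stopping time `τ`. -/
def sigmaTauPlus (τ : Dloc S → ℝ≥0∞) : MeasurableSpace (Dloc S) :=
  MeasurableSpace.generateFrom
    {A | MeasurableSet A ∧ ∀ t : ℝ≥0, MeasurableSet[FPlus S t] (A ∩ {x | τ x ≤ (t : ℝ≥0∞)})}

/-- `P` is `(F_{t+})_t`-quasi-continuous: for `(F_{t+})_t`-stopping times `τ, τ₁, τ₂, …`,
`X_{τ_n} → X_τ` `P`-a.s. on `{τ_n → τ < ∞}`, with the convention `X_∞ := Δ`. -/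
def QuasiCts (P : Measure (Dloc S)) : Prop :=
  ∀ τ : Dloc S → ℝ≥0∞, ∀ τn : ℕ → Dloc S → ℝ≥0∞,
    IsStopT τ → (∀ n, IsStopT (τn n)) →
    ∀ᵐ x ∂P, (Tendsto (fun n => τn n x) atTop (𝓝 (τ x)) ∧ τ x < ∞) →
      Tendsto (fun n => evalAtE x.1 (τn n x)) atTop (𝓝 (evalAtE x.1 (τ x)))

/-- The family `(P_a)_a` is `(F_{t+})_t`-strong Markov. -/
def IsStrongMarkov (P : S → Measure (Dloc S)) : Prop :=
  ∀ τ : Dloc S → ℝ≥0∞, IsStopT τ → ∀ B : Set (Dloc S), MeasurableSet B → ∀ a : S,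
    (P a)[Set.indicator (shiftTauD τ ⁻¹' B) (fun _ => (1 : ℝ)) | sigmaTauPlus τ]
      =ᵐ[P a] fun x => (PextF P (evalAtE x.1 (τ x)) B).toReal

/-! ### Positive maximum principle, operators -/

/-- `L ⊆ C₀(S) × C(S)` satisfies the positive maximum principle. -/
def PMP (L : Set (C₀(S, ℝ) × C(S, ℝ))) : Prop :=
  ∀ fg ∈ L, ∀ a0 : S, (∀ a : S, fg.1 a ≤ fg.1 a0) → 0 ≤ fg.1 a0 → fg.2 a0 ≤ 0

/-- `L` is a linear subspace of `C₀(S) × C(S)`. -/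
def IsLinSub (L : Set (C₀(S, ℝ) × C(S, ℝ))) : Prop :=
  (0 : C₀(S, ℝ) × C(S, ℝ)) ∈ L ∧ (∀ p ∈ L, ∀ q ∈ L, p + q ∈ L) ∧
    ∀ (c : ℝ), ∀ p ∈ L, c • p ∈ L

/-- The `C₀×C`-generator of a family `(P_a)_a`: the set of `(f,g) ∈ C₀(S) × C(S)` such that
for all `a` and all open `U ⋐ S`, `f(X_{t∧τ^U}) − ∫_0^{t∧τ^U} g(X_s) ds` is a
`P_a`-martingale. -/
def genC (P : S → Measure (Dloc S)) : Set (C₀(S, ℝ) × C(S, ℝ)) :=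
  {fg | ∀ a : S, ∀ U : Set S, OpenCpt S U →
    Martingale (fun t => martProc (fg.1 : S → ℝ) (fg.2 : S → ℝ) U t) (canFilt S) (P a)}

/-- The `C₀×C₀`-generator of a Feller family `(P_a)_a`: the pairs `(f,g) ∈ C₀(S) × C₀(S)`
with `(T_t f(a) − f(a))/t → g(a)` for every `a`, where `T_t f(a) := E_a[f(X_t)]`. -/
def genC0 (P : S → Measure (Dloc S)) : Set (C₀(S, ℝ) × C₀(S, ℝ)) :=
  {fg | ∀ a : S,
    Tendsto (fun t : ℝ≥0 => ((∫ x, gop (fg.1 : S → ℝ) (x.1 t) ∂(P a)) - fg.1 a) / (t : ℝ))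
      (𝓝[>] 0) (𝓝 (fg.2 a))}

/-! ### The compactified martingale problem -/

/-- `L^Δ := span(L ∪ {(1_{S^Δ}, 0)})`, as a set of pairs of functions on `S^Δ`. -/
def LDelta (L : Set (C₀(S, ℝ) × C₀(S, ℝ))) : Set ((SD S → ℝ) × (SD S → ℝ)) :=
  (Submodule.span ℝ
    ((fun fg : C₀(S, ℝ) × C₀(S, ℝ) => (gop (fg.1 : S → ℝ), gop (fg.2 : S → ℝ))) '' L ∪
      {((fun _ => 1), (fun _ => 0))}) : Submodule ℝ ((SD S → ℝ) × (SD S → ℝ)))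

/-- The set `M_c(L^Δ)` of solutions, supported by `S^Δ`-conservative paths, of the
martingale problem on `D(S^Δ)` associated to a set `LD` of pairs of functions on `S^Δ`. -/
def McSet (LD : Set ((SD S → ℝ) × (SD S → ℝ))) : Set (Measure (DD S)) :=
  {P | IsProbabilityMeasure P ∧ ∀ fg ∈ LD,
    Martingale
      (fun (t : ℝ≥0) (x : DD S) =>
        fg.1 (x.1 t) - ∫ s in Set.Ioc (0 : ℝ) (t : ℝ), fg.2 (x.1 (Real.toNNReal s)))
      (canFiltDD S) P}

/-- The constant path at `Δ`, as an element of `D(S^Δ)`. -/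
def deltaPathDD : DD S :=
  ⟨fun _ => OnePoint.infty, fun _ => tendsto_const_nhds,
    fun _ _ => ⟨OnePoint.infty, tendsto_const_nhds⟩⟩

/-- The canonical map from `D_loc(S)` to `D(S^Δ)` (the identity on `D_loc(S) ∩ D(S^Δ)`). -/
def toDD (x : Dloc S) : DD S :=
  if h : x.1 ∈ DDSet S then ⟨x.1, h⟩ else deltaPathDD

/-! ### Feller semigroups -/

/-- A Feller semigroup on `C₀(S)`. -/
structure IsFellerSemigroup (T : ℝ≥0 → C₀(S, ℝ) → C₀(S, ℝ)) : Prop where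
  linear : ∀ t, IsLinearMap ℝ (T t)
  id0 : ∀ f, T 0 f = f
  semigroup : ∀ s t f, T (s + t) f = T s (T t f)
  contraction : ∀ t f, ‖T t f‖ ≤ ‖f‖
  positive : ∀ t (f : C₀(S, ℝ)), (∀ a, 0 ≤ f a) → ∀ a, 0 ≤ T t f a
  strongCont : ∀ f, Tendsto (fun t : ℝ≥0 => T t f) (𝓝 0) (𝓝 f)

/-- The generator of a semigroup on `C₀(S)`: pairs `(f,g)` with
`(T_t f(a) − f(a))/t → g(a)` for every `a ∈ S`. -/
def semigroupGen (T : ℝ≥0 → C₀(S, ℝ) → C₀(S, ℝ)) : Set (C₀(S, ℝ) × C₀(S, ℝ)) :=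
  {fg | ∀ a : S,
    Tendsto (fun t : ℝ≥0 => (T t fg.1 a - fg.1 a) / (t : ℝ)) (𝓝[>] 0) (𝓝 (fg.2 a))}

/-! For fixed `P`, the pairs `(f, g)` for which every stopped process
`f(X_{t∧τ^U}) − ∫_0^{t∧τ^U} g(X_s) ds` is a `P`-martingale form a linear subspace, since the
process is linear in `(f, g)`. The subspace is also closed: before `τ^U` the path stays in `U`, so
the process moves by at most `‖f − f'‖ + t · sup_{Ū} |g − g'|` when `(f, g)` is changed, hence
convergence in `C₀(S) × C(S)` gives bounded pointwise convergence of the processes, and bounded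
pointwise limits of martingales are martingales by dominated convergence for conditional
expectations. -/

theorem measurable_of_continuousWithinAt_Ioi {X : Type*} [TopologicalSpace X]
    [TopologicalSpace.PseudoMetrizableSpace X] [MeasurableSpace X] [BorelSpace X]
    {f : ℝ≥0 → X} (hf : ∀ s, ContinuousWithinAt f (Ioi s) s) : Measurable f := by
  -- approximate `s` from the right by the dyadic grid `(⌊2ⁿ s⌋ + 1) / 2ⁿ`
  let δ : ℕ → ℝ≥0 → ℝ≥0 := fun n s => ((⌊(s : ℝ) * 2 ^ n⌋₊ : ℝ≥0) + 1) / 2 ^ n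
  have hpow : ∀ n : ℕ, (0 : ℝ) < 2 ^ n := fun n => by positivity
  have hδ_gt : ∀ n s, s < δ n s := by
    intro n s
    rw [← NNReal.coe_lt_coe]
    push_cast [δ]
    rw [lt_div_iff₀ (hpow n)]
    exact Nat.lt_floor_add_one _
  have hδ_le : ∀ n s, (δ n s : ℝ) ≤ s + (1 / 2) ^ n := by
    intro n s
    push_cast [δ]
    rw [div_le_iff₀ (hpow n), add_mul, ← mul_pow, one_div, inv_mul_cancel₀ two_ne_zero, one_pow]
    linarith [Nat.floor_le (by positivity : (0 : ℝ) ≤ s * 2 ^ n)]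
  have hδ_tendsto : ∀ s, Tendsto (fun n => δ n s) atTop (𝓝[>] s) := by
    intro s
    refine tendsto_nhdsWithin_iff.2 ⟨?_, Eventually.of_forall fun n => hδ_gt n s⟩
    rw [← NNReal.tendsto_coe]
    have hup : Tendsto (fun n : ℕ => (s : ℝ) + (1 / 2) ^ n) atTop (𝓝 s) := by
      simpa using tendsto_const_nhds.add
        (tendsto_pow_atTop_nhds_zero_of_lt_one (r := (1 / 2 : ℝ)) (by norm_num) (by norm_num))
    exact tendsto_of_tendsto_of_tendsto_of_le_of_le tendsto_const_nhds hup
      (fun n => (hδ_gt n s).le) (hδ_le · s)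
  have hδ_meas : ∀ n, Measurable (δ n) := fun n =>
    (measurable_from_nat (f := fun k : ℕ => ((k : ℝ≥0) + 1) / 2 ^ n)).comp
      (Nat.measurable_floor.comp (measurable_coe_nnreal_real.mul measurable_const))
  have hδ_range : ∀ n, (range (δ n)).Countable := fun n =>
    (countable_range fun k : ℕ => ((k : ℝ≥0) + 1) / 2 ^ n).mono
      (by rintro _ ⟨s, rfl⟩; exact ⟨_, rfl⟩)
  have hcomp : ∀ n, Measurable (f ∘ δ n) := fun n => by
    have := (hδ_range n).to_subtype
    exact (measurable_of_countable fun y : range (δ n) => f y).comp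
      (hδ_meas n).subtype_mk (f := fun s => (⟨δ n s, s, rfl⟩ : range (δ n)))
  exact measurable_of_tendsto_metrizable hcomp
    (tendsto_pi_nhds.2 fun s => (hf s).tendsto.comp (hδ_tendsto s))

theorem martingale_of_tendsto {Ω ι E : Type*} [Preorder ι] {m0 : MeasurableSpace Ω}
    [NormedAddCommGroup E] [NormedSpace ℝ E] [CompleteSpace E]
    {ℱ : Filtration ι m0} {μ : Measure Ω} [IsFiniteMeasure μ]
    {M : ℕ → ι → Ω → E} {M' : ι → Ω → E} (hM : ∀ n, Martingale (M n) ℱ μ)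
    (hlim : ∀ i ω, Tendsto (fun n => M n i ω) atTop (𝓝 (M' i ω)))
    (hbdd : ∀ i, ∃ C, ∀ᶠ n in atTop, ∀ ω, ‖M n i ω‖ ≤ C) : Martingale M' ℱ μ := by
  have hadapted : StronglyAdapted ℱ M' := fun i =>
    stronglyMeasurable_of_tendsto atTop (fun n => (hM n).stronglyAdapted i)
      (tendsto_pi_nhds.2 (hlim i))
  have hint : ∀ i, Integrable (M' i) μ := fun i => by
    obtain ⟨C, hC⟩ := hbdd i
    exact .of_bound ((hadapted i).mono (ℱ.le i)).aestronglyMeasurable C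
      (ae_of_all _ fun ω => le_of_tendsto (hlim i ω).norm (hC.mono fun n hn => hn ω))
  refine ⟨hadapted, fun i j hij => ?_⟩
  obtain ⟨Ci, hCi⟩ := hbdd i
  obtain ⟨Cj, hCj⟩ := hbdd j
  obtain ⟨N, hN⟩ := eventually_atTop.1 (hCi.and hCj)
  have hcond : ∀ n, μ[M (n + N) j | ℱ i] =ᵐ[μ] μ[M (n + N) i | ℱ i] := fun n => by
    rw [condExp_of_stronglyMeasurable (ℱ.le i) ((hM _).stronglyAdapted i) ((hM _).integrable i)]
    exact (hM _).condExp_ae_eq hij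
  refine (tendsto_condExp_unique _ _ _ _ (fun _ => (hM _).integrable j)
    (fun _ => (hM _).integrable i)
    (ae_of_all _ fun ω => (hlim j ω).comp (tendsto_add_atTop_nat N))
    (ae_of_all _ fun ω => (hlim i ω).comp (tendsto_add_atTop_nat N))
    (fun _ => Cj) (integrable_const _) (fun _ => Ci) (integrable_const _)
    (fun _ => ae_of_all _ (hN _ le_add_self).2) (fun _ => ae_of_all _ (hN _ le_add_self).1)
    hcond).trans ?_
  rw [condExp_of_stronglyMeasurable (ℱ.le i) (hadapted i) (hint i)]

section ExtendByZero

variable {X : Type}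

@[simp] theorem gop_coe (g : X → ℝ) (a : X) : gop g (a : SD X) = g a := rfl

@[simp] theorem gop_infty (g : X → ℝ) : gop g OnePoint.infty = 0 := rfl

theorem gop_add (f f' : X → ℝ) : gop (f + f') = gop f + gop f' := by
  funext y
  induction y using OnePoint.rec <;> simp

theorem gop_smul (c : ℝ) (f : X → ℝ) : gop (c • f) = c • gop f := by
  funext y
  induction y using OnePoint.rec <;> simp

theorem gop_zero : gop (0 : X → ℝ) = 0 := by
  simpa using gop_smul 0 (0 : X → ℝ)

theorem abs_gop_sub_le {f f' : X → ℝ} {D : ℝ} (hD : 0 ≤ D) (h : ∀ a, |f a - f' a| ≤ D)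
    (y : SD X) : |gop f y - gop f' y| ≤ D := by
  induction y using OnePoint.rec <;> simp [hD, h]

end ExtendByZero

section Paths

variable {X : Type} [TopologicalSpace X] {x : ℝ≥0 → SD X} {U : Set X}

theorem xi_le_of_eq_infty {s : ℝ≥0} (h : x s = OnePoint.infty) : xi x ≤ s :=
  sInf_le ⟨s, rfl, fun ⟨_, _, hsub⟩ => by
    obtain ⟨a, -, ha⟩ := hsub ⟨s, le_rfl, h⟩
    exact OnePoint.coe_ne_infty a ha⟩

-- A path of `D_loc(S)` stays at `Δ` once it gets there, so `g` need not be continuous at `Δ`.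
theorem continuousWithinAt_gop_comp {g : X → ℝ} (hg : Continuous g) (hx : x ∈ DlocSet)
    (s : ℝ≥0) : ContinuousWithinAt (fun r => gop g (x r)) (Ioi s) s := by
  induction hs : x s using OnePoint.rec with
  | infty =>
    have hΔ : ∀ r ∈ Ioi s, x r = OnePoint.infty := fun r hr =>
      hx.1 r ((xi_le_of_eq_infty hs).trans (by exact_mod_cast le_of_lt hr))
    exact (continuousWithinAt_const (b := (0 : ℝ))).congr (fun r hr => by simp [hΔ r hr])
      (by simp [hs])
  | coe a =>
    have hga : ContinuousAt (gop g) (a : SD X) :=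
      OnePoint.isOpenEmbedding_coe.continuousAt_iff.1 hg.continuousAt
    rw [ContinuousWithinAt, hs]
    exact hga.tendsto.comp (hs ▸ hx.2.1 s)

theorem measurable_gop_comp {g : X → ℝ} (hg : Continuous g) (hx : x ∈ DlocSet) :
    Measurable fun r => gop g (x r) :=
  measurable_of_continuousWithinAt_Ioi (continuousWithinAt_gop_comp hg hx)

theorem mem_emb_of_lt_tauU {s : ℝ≥0} (h : (s : ℝ≥0∞) < tauU U x) : x s ∈ emb U := by
  by_contra hs
  exact h.not_ge ((min_le_right _ _).trans (sInf_le ⟨s, rfl, Or.inr hs⟩))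

theorem ae_mem_emb_of_mem_Ioc (t : ℝ≥0) :
    ∀ᵐ s ∂volume.restrict (Ioc (0 : ℝ) (min (t : ℝ≥0∞) (tauU U x)).toReal),
      x s.toNNReal ∈ emb U := by
  rw [← Measure.restrict_congr_set Ioo_ae_eq_Ioc]
  refine ae_restrict_of_forall_mem measurableSet_Ioo fun s hs => mem_emb_of_lt_tauU ?_
  have hfinite : min (t : ℝ≥0∞) (tauU U x) ≠ ∞ :=
    ((min_le_left _ _).trans_lt ENNReal.coe_lt_top).ne
  have hlt : ENNReal.ofReal s < min (t : ℝ≥0∞) (tauU U x) :=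
    (ENNReal.ofReal_lt_iff_lt_toReal hs.1.le hfinite).2 hs.2
  exact hlt.trans_le (min_le_right _ _)

theorem integrableOn_gop_comp {g : X → ℝ} (hg : Continuous g) (hx : x ∈ DlocSet)
    (hU : IsCompact (closure U)) (t : ℝ≥0) :
    IntegrableOn (fun s : ℝ => gop g (x s.toNNReal))
      (Ioc 0 (min (t : ℝ≥0∞) (tauU U x)).toReal) := by
  obtain ⟨C, hC⟩ := hU.exists_bound_of_continuousOn hg.continuousOn
  refine .of_bound measure_Ioc_lt_top
    ((measurable_gop_comp hg hx).comp measurable_real_toNNReal).aestronglyMeasurable C ?_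
  filter_upwards [ae_mem_emb_of_mem_Ioc t] with s ⟨a, ha, hxa⟩
  simpa [← hxa] using hC a (subset_closure ha)

end Paths

section MartProc

variable {X : Type} [TopologicalSpace X] {U : Set X}

theorem martProc_zero (U : Set X) (t : ℝ≥0) (x : Dloc X) : martProc 0 0 U t x = 0 := by
  simp [martProc, gop_zero]

theorem martProc_smul (c : ℝ) (f g : X → ℝ) (U : Set X) (t : ℝ≥0) (x : Dloc X) :
    martProc (c • f) (c • g) U t x = c * martProc f g U t x := by
  simp only [martProc, gop_smul, Pi.smul_apply, smul_eq_mul, integral_const_mul]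
  ring

theorem martProc_add (hU : IsCompact (closure U)) (f f' : X → ℝ) {g g' : X → ℝ}
    (hg : Continuous g) (hg' : Continuous g') (t : ℝ≥0) (x : Dloc X) :
    martProc (f + f') (g + g') U t x = martProc f g U t x + martProc f' g' U t x := by
  simp only [martProc, gop_add, Pi.add_apply,
    integral_add (integrableOn_gop_comp hg x.2 hU t) (integrableOn_gop_comp hg' x.2 hU t)]
  ring

theorem abs_martProc_sub_le (hU : IsCompact (closure U)) {f f' g g' : X → ℝ} {C D : ℝ}
    (hD : 0 ≤ D) (hf : ∀ a, |f a - f' a| ≤ D) (hg : Continuous g) (hg' : Continuous g')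
    (hC : 0 ≤ C) (hgg' : ∀ a ∈ U, |g a - g' a| ≤ C) (t : ℝ≥0) (x : Dloc X) :
    |martProc f g U t x - martProc f' g' U t x| ≤ D + C * t := by
  set T := (min (t : ℝ≥0∞) (tauU U x.1)).toReal
  have hT : T ≤ t := ENNReal.toReal_le_of_le_ofReal t.coe_nonneg
    ((min_le_left _ _).trans_eq (ENNReal.ofReal_coe_nnreal).symm)
  have hvalue := abs_gop_sub_le hD hf (evalAtE x.1 (min (t : ℝ≥0∞) (tauU U x.1)))
  have hintegral :
      |(∫ s in Ioc 0 T, gop g (x.1 s.toNNReal)) - ∫ s in Ioc 0 T, gop g' (x.1 s.toNNReal)|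
        ≤ C * t := by
    rw [← integral_sub (integrableOn_gop_comp hg x.2 hU t) (integrableOn_gop_comp hg' x.2 hU t)]
    calc ‖∫ s in Ioc 0 T, (gop g (x.1 s.toNNReal) - gop g' (x.1 s.toNNReal))‖
        ≤ C * volume.real (Ioc 0 T) := by
          refine norm_setIntegral_le_of_norm_le_const_ae measure_Ioc_lt_top ?_
          filter_upwards [ae_mem_emb_of_mem_Ioc t] with s ⟨a, ha, hxa⟩
          simpa [← hxa] using hgg' a ha
      _ ≤ C * t := by
          rw [Real.volume_real_Ioc_of_le ENNReal.toReal_nonneg, sub_zero]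
          exact mul_le_mul_of_nonneg_left hT hC
  unfold martProc
  rw [sub_sub_sub_comm]
  exact (abs_sub _ _).trans (add_le_add hvalue hintegral)

end MartProc

section Pairs

variable {X : Type} [TopologicalSpace X] {U : Set X}

theorem abs_apply_le_norm (f : C₀(X, ℝ)) (a : X) : |f a| ≤ ‖f‖ :=
  ZeroAtInftyContinuousMap.norm_toBCF_eq_norm (f := f) ▸ f.toBCF.norm_coe_le_norm a

theorem eventually_abs_martProc_sub_le (hU : IsCompact (closure U))
    {F : ℕ → C₀(X, ℝ) × C(X, ℝ)} {p : C₀(X, ℝ) × C(X, ℝ)} (hF : Tendsto F atTop (𝓝 p))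
    {ε : ℝ} (hε : 0 < ε) :
    ∀ᶠ n in atTop, ∀ t x, |martProc (F n).1 (F n).2 U t x - martProc p.1 p.2 U t x|
      ≤ ε * (1 + t) := by
  have hf : ∀ᶠ n in atTop, ‖(F n).1 - p.1‖ < ε :=
    (tendsto_iff_norm_sub_tendsto_zero.1 (hF.fst_nhds)).eventually_lt_const hε
  have hg : ∀ᶠ n in atTop, ∀ a ∈ closure U, dist (p.2 a) ((F n).2 a) < ε :=
    Metric.tendstoUniformlyOn_iff.1
      (ContinuousMap.tendsto_iff_forall_isCompact_tendstoUniformlyOn.1 hF.snd_nhds _ hU) ε hε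
  filter_upwards [hf, hg] with n hfn hgn t x
  have := abs_martProc_sub_le hU hε.le
    (fun a => by simpa using (abs_apply_le_norm ((F n).1 - p.1) a).trans hfn.le)
    (F n).2.continuous p.2.continuous hε.le
    (fun a ha => by simpa [Real.dist_eq, abs_sub_comm] using (hgn a (subset_closure ha)).le) t x
  linarith

theorem tendsto_martProc (hU : IsCompact (closure U))
    {F : ℕ → C₀(X, ℝ) × C(X, ℝ)} {p : C₀(X, ℝ) × C(X, ℝ)} (hF : Tendsto F atTop (𝓝 p))
    (t : ℝ≥0) (x : Dloc X) :
    Tendsto (fun n => martProc (F n).1 (F n).2 U t x) atTop (𝓝 (martProc p.1 p.2 U t x)) := by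
  refine Metric.tendsto_atTop.2 fun ε hε => eventually_atTop.1 ?_
  have hpos : 0 < ε / (2 * (1 + t)) := by positivity
  filter_upwards [eventually_abs_martProc_sub_le hU hF hpos] with n hn
  calc dist _ _ ≤ ε / (2 * (1 + t)) * (1 + t) := hn t x
    _ < ε := by field_simp; linarith

theorem exists_eventually_abs_martProc_le (hU : IsCompact (closure U))
    {F : ℕ → C₀(X, ℝ) × C(X, ℝ)} {p : C₀(X, ℝ) × C(X, ℝ)} (hF : Tendsto F atTop (𝓝 p))
    (t : ℝ≥0) : ∃ C, ∀ᶠ n in atTop, ∀ x, |martProc (F n).1 (F n).2 U t x| ≤ C := by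
  obtain ⟨C, hC⟩ := hU.exists_bound_of_continuousOn p.2.continuous.continuousOn
  have hp : ∀ x, |martProc p.1 p.2 U t x| ≤ ‖p.1‖ + |C| * t := fun x => by
    simpa [martProc_zero] using abs_martProc_sub_le (f' := 0) (g' := 0) hU (norm_nonneg _)
      (by simpa using abs_apply_le_norm p.1) p.2.continuous continuous_const (abs_nonneg C)
      (fun a ha => by simpa using (hC a (subset_closure ha)).trans (le_abs_self C)) t x
  refine ⟨‖p.1‖ + |C| * t + (1 + t), ?_⟩
  filter_upwards [eventually_abs_martProc_sub_le hU hF one_pos] with n hn x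
  have := abs_sub_abs_le_abs_sub (martProc (F n).1 (F n).2 U t x) (martProc p.1 p.2 U t x)
  linarith [hn t x, hp x]

variable (X) in
def martPairs (P : Measure (Dloc X)) : Submodule ℝ (C₀(X, ℝ) × C(X, ℝ)) where
  carrier := {p | ∀ U, OpenCpt X U → Martingale (fun t => martProc p.1 p.2 U t) (canFilt X) P}
  zero_mem' U _ := by
    convert martingale_zero ℝ (canFilt X) P using 1
    funext t x
    exact martProc_zero U t x
  add_mem' {p q} hp hq U hU := by
    convert (hp U hU).add (hq U hU) using 1
    funext t x
    exact martProc_add hU.2 _ _ p.2.continuous q.2.continuous t x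
  smul_mem' c p hp U hU := by
    convert (hp U hU).smul c using 1
    funext t x
    exact martProc_smul c _ _ U t x

theorem isClosed_martPairs [LocallyCompactSpace X] [SecondCountableTopology X]
    (P : Measure (Dloc X)) [IsFiniteMeasure P] :
    IsClosed (martPairs X P : Set (C₀(X, ℝ) × C(X, ℝ))) :=
  IsSeqClosed.isClosed fun _ _ hF hFp U hU =>
    martingale_of_tendsto (fun n => hF n U hU) (tendsto_martProc hU.2 hFp)
      (exists_eventually_abs_martProc_le hU.2 hFp)

theorem mem_MartSet_iff {L : Set (C₀(X, ℝ) × C(X, ℝ))} {P : Measure (Dloc X)} :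
    P ∈ MartSet L ↔ IsProbabilityMeasure P ∧ L ⊆ martPairs X P :=
  Iff.rfl

end Pairs

/-- closure property. For any `L ⊆ C₀(S) × C(S)`, the set of solutions of
the martingale local problem is unchanged by taking the closed linear span:
`M(closure(span L)) = M(L)`. -/
theorem stmt1 (L : Set (C₀(S, ℝ) × C(S, ℝ))) :
    MartSet (closure (Submodule.span ℝ L : Set (C₀(S, ℝ) × C(S, ℝ)))) = MartSet L := by
  ext P
  simp only [mem_MartSet_iff]
  refine and_congr_right fun _ => ⟨(Submodule.subset_span.trans subset_closure).trans,
    fun h => closure_minimal (Submodule.span_le.2 h) (isClosed_martPairs P)⟩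

end LocFeller
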